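/- arXiv:2408.04185 — 2 statements merged into one kernel-verified Lean document; each statement's English description precedes it below -/
import Mathlib

section
/- Let n and r be integers with 1 ≤ r ≤ n, and let π ∈ S_{n-1}. Define S(π) = {π_i : 2 ≤ i ≤ n-1 and π_{i-1} ≥ π_i + r} ∪ {π_i : 1 ≤ i ≤ n-1 and π_i > n - r}. Then |S(π)| = rdes(π) + r - 1. -/
open Finset

/-- The value of the permutation `π ∈ S_n` at the (1-based) position `i`,
in one-line notation with letters `1,…,n`; `0` if `i` is out of range. -/
def pval {n : ℕ} (π : Equiv.Perm (Fin n)) (i : ℕ) : ℕ :=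
  if h : 1 ≤ i ∧ i ≤ n then ((π ⟨i - 1, by omega⟩ : Fin n) : ℕ) + 1 else 0

/-- The number of inversions of a word `w`, i.e. pairs of positions `i < j`
with `w_i > w_j`. -/
def winv (w : List ℕ) : ℕ :=
  ((Finset.range w.length ×ˢ Finset.range w.length).filter
    (fun p => p.1 < p.2 ∧ w.getD p.2 0 < w.getD p.1 0)).card

/-- `rDes(π) = {i ∈ [n-1] : π_i ≥ π_{i+1} + r}`. -/
def rDesSet {n : ℕ} (r : ℕ) (π : Equiv.Perm (Fin n)) : Finset ℕ :=
  (Finset.Icc 1 (n - 1)).filter (fun i => pval π (i + 1) + r ≤ pval π i)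

/-- The `r`-descent number `rdes(π)`. -/
def rdes {n : ℕ} (r : ℕ) (π : Equiv.Perm (Fin n)) : ℕ := (rDesSet r π).card

/-- `rInv(π) = {(i,j) : i < j, π_i > π_j, π_i < π_j + r}`. -/
def rInvSet {n : ℕ} (r : ℕ) (π : Equiv.Perm (Fin n)) : Finset (ℕ × ℕ) :=
  ((Finset.Icc 1 n) ×ˢ (Finset.Icc 1 n)).filter
    (fun p => p.1 < p.2 ∧ pval π p.2 < pval π p.1 ∧ pval π p.1 < pval π p.2 + r)

/-- The `r`-major index `rmaj(π) = ∑_{i ∈ rDes(π)} i + |rInv(π)|`. -/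
def rmaj {n : ℕ} (r : ℕ) (π : Equiv.Perm (Fin n)) : ℕ :=
  (∑ i ∈ rDesSet r π, i) + (rInvSet r π).card

/-- The inversion number `inv(π)`: the number of pairs `i < j` with `π_i > π_j`. -/
def invStat {n : ℕ} (π : Equiv.Perm (Fin n)) : ℕ :=
  (((Finset.Icc 1 n) ×ˢ (Finset.Icc 1 n)).filter
    (fun p => p.1 < p.2 ∧ pval π p.2 < pval π p.1)).card

/-- `Excp_r(π)`: the set of `r`-level excedance places, i.e. indices `i`
with `π_i > i` and `π_i ≥ r`. -/
def excpSet {n : ℕ} (r : ℕ) (π : Equiv.Perm (Fin n)) : Finset ℕ :=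
  (Finset.Icc 1 n).filter (fun i => i < pval π i ∧ r ≤ pval π i)

/-- `Exc_r(π)`: the subword of `π` on the `r`-level excedance places,
in increasing order of position. -/
def excWord {n : ℕ} (r : ℕ) (π : Equiv.Perm (Fin n)) : List ℕ :=
  ((excpSet r π).sort (· ≤ ·)).map (pval π)

/-- `Nexc_r(π)`: the subword of `π` on the non-`r`-level-excedance places,
in increasing order of position. -/
def nexcWord {n : ℕ} (r : ℕ) (π : Equiv.Perm (Fin n)) : List ℕ :=
  (((Finset.Icc 1 n) \ excpSet r π).sort (· ≤ ·)).map (pval π)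

/-- The `r`-level Denert statistic
`den_r(π) = ∑_{i ∈ Excp_r(π)} i + inv(Exc_r(π)) + inv(Nexc_r(π))`. -/
def denr {n : ℕ} (r : ℕ) (π : Equiv.Perm (Fin n)) : ℕ :=
  (∑ i ∈ excpSet r π, i) + winv (excWord r π) + winv (nexcWord r π)

/-- The `r`-level excedance number `exc_r(π) = |{i : π_i > i ≥ r}|`. -/
def excr {n : ℕ} (r : ℕ) (π : Equiv.Perm (Fin n)) : ℕ :=
  ((Finset.Icc 1 n).filter (fun i => r ≤ i ∧ i < pval π i)).card

section PermValues

variable {n : ℕ} (π : Equiv.Perm (Fin n))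

lemma pval_le (i : ℕ) : pval π i ≤ n := by
  unfold pval
  split
  · exact (π _).isLt
  · omega

lemma pval_injOn : Set.InjOn (pval π) (Icc 1 n) := by
  intro i hi j hj hij
  simp only [coe_Icc, Set.mem_Icc] at hi hj
  simp only [pval, dif_pos hi, dif_pos hj, Nat.add_right_cancel_iff, Fin.val_inj,
    EmbeddingLike.apply_eq_iff_eq, Fin.mk.injEq] at hij
  omega

lemma exists_pval_eq {v : ℕ} (h1 : 1 ≤ v) (h2 : v ≤ n) : ∃ i ∈ Icc 1 n, pval π i = v := by
  set j := π.symm ⟨v - 1, by omega⟩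
  have hj : (j : ℕ) < n := j.isLt
  refine ⟨j + 1, mem_Icc.mpr ⟨by omega, hj⟩, ?_⟩
  have hj' : (⟨j + 1 - 1, by omega⟩ : Fin n) = j := Fin.ext (by simp)
  simp only [pval, dif_pos (show 1 ≤ (j : ℕ) + 1 ∧ (j : ℕ) + 1 ≤ n by omega), hj', j,
    Equiv.apply_symm_apply]
  omega

lemma image_pval_filter_lt (m : ℕ) :
    ((Icc 1 n).filter (fun i => m < pval π i)).image (pval π) = Ioc m n := by
  ext v
  simp only [mem_image, mem_filter, mem_Ioc]
  constructor
  · rintro ⟨i, ⟨-, hi⟩, rfl⟩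
    exact ⟨hi, pval_le π i⟩
  · rintro ⟨hmv, hvn⟩
    obtain ⟨i, hi, rfl⟩ := exists_pval_eq π (by omega) hvn
    exact ⟨i, ⟨hi, hmv⟩, rfl⟩

/-- Shifting positions by one identifies `rDes(π)` with the set of `i` at which `π_{i-1} ≥ π_i + r`,
on which `π` is injective. -/
lemma card_image_pval_filter_eq_rdes (r : ℕ) :
    (((Icc 2 n).filter (fun i => pval π i + r ≤ pval π (i - 1))).image (pval π)).card
      = rdes r π := by
  have hsub : (Icc 2 n).filter (fun i => pval π i + r ≤ pval π (i - 1)) ⊆ Icc 1 n :=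
    (filter_subset _ _).trans (Icc_subset_Icc_left (by norm_num))
  rw [card_image_of_injOn ((pval_injOn π).mono (coe_subset.mpr hsub)), rdes, rDesSet]
  refine card_nbij' (· - 1) (· + 1) ?_ ?_ ?_ ?_ <;> intro i hi <;>
    simp only [coe_filter, mem_Icc, Set.mem_ofPred_eq] at hi ⊢
  · rw [Nat.sub_add_cancel (by omega : 1 ≤ i)]; omega
  · rw [Nat.add_sub_cancel]; omega
  · omega
  · omega

lemma disjoint_image_pval_filter_Ioc (r : ℕ) {m : ℕ} (hm : n - r ≤ m) :
    Disjoint (((Icc 2 n).filter (fun i => pval π i + r ≤ pval π (i - 1))).image (pval π))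
      (Ioc m n) := by
  rw [disjoint_left]
  rintro _ hv hv'
  obtain ⟨i, ⟨-, hi⟩, rfl⟩ := by simpa only [mem_image, mem_filter] using hv
  have := pval_le π (i - 1)
  rw [mem_Ioc] at hv'
  omega

end PermValues

/-- The large values `π_i > n - r` are exactly `n - r + 1, …, n - 1`, and they are never the
smaller letter of an `r`-descent, since that letter is at most `n - 1 - r`. -/
theorem card_S_eq_rdes_add (n r : ℕ) (hr : 1 ≤ r) (hrn : r ≤ n)
    (π : Equiv.Perm (Fin (n - 1))) :
    (((Finset.Icc 2 (n - 1)).filter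
        (fun i => pval π i + r ≤ pval π (i - 1))).image (pval π) ∪
      ((Finset.Icc 1 (n - 1)).filter
        (fun i => n - r < pval π i)).image (pval π)).card
      = rdes r π + r - 1 := by
  rw [image_pval_filter_lt, card_union_of_disjoint (disjoint_image_pval_filter_Ioc π r (by omega)),
    card_image_pval_filter_eq_rdes, Nat.card_Ioc]
  omega
end

section
/- For every positive integer n and every positive integer r, the statistics rmaj and inv are equidistributed over S_n: ∑_{π∈S_n} q^{rmaj(π)} = ∑_{π∈S_n} q^{inv(π)} = [n]_q [n-1]_q ⋯ [1]_q, where [k]_q = 1 + q + q² + ⋯ + q^{k-1}. Equivalently, for every nonnegative integer m, the number of π ∈ S_n with rmaj(π) = m equals the number of π ∈ S_n with inv(π) = m. -/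
open Finset

/-!
Every permutation word of `1, …, n + 1` arises exactly once by inserting the letter `n + 1` into
a permutation word `a` of `1, …, n` at a slot `k ∈ {0, …, n}` (after the first `k` letters).
Such an insertion raises `inv` by `n - k`. It raises `rmaj` by a label of the slot: call slot `s`
free if `s < n`, `a (s+1) + r ≤ n + 1` and `a s < a (s+1) + r`, i.e. the new letter creates an
`r`-descent there and destroys none; the non-free slots are labelled `0, 1, 2, …` from right to
left, and a free slot `k` gets `k` plus the number of non-free slots to its right. These labels
are a permutation of `0, …, n`, so for both statistics the increments run once through
`0, …, n`, and both distributions obey the recursion `[n+1]_q! = [n]_q! · [n+1]_q`.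
-/

section Insertion

def shiftAbove (k i : ℕ) : ℕ := if i ≤ k then i else i + 1

def insertAt (k M : ℕ) (a : ℕ → ℕ) (i : ℕ) : ℕ :=
  if i ≤ k then a i else if i = k + 1 then M else a (i - 1)

@[simp] lemma insertAt_shiftAbove (k M : ℕ) (a : ℕ → ℕ) (i : ℕ) :
    insertAt k M a (shiftAbove k i) = a i := by
  unfold insertAt shiftAbove
  split_ifs <;> first | rfl | omega

@[simp] lemma insertAt_succ_self (k M : ℕ) (a : ℕ → ℕ) : insertAt k M a (k + 1) = M := by
  simp [insertAt]

lemma shiftAbove_lt_shiftAbove_iff {k i j : ℕ} : shiftAbove k i < shiftAbove k j ↔ i < j := by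
  unfold shiftAbove; split_ifs <;> omega

lemma sum_Icc_succ_eq_add_sum_shiftAbove {M : Type*} [AddCommMonoid M] (f : ℕ → M)
    {k n : ℕ} (hk : k ≤ n) :
    ∑ i ∈ Icc 1 (n + 1), f i = f (k + 1) + ∑ i ∈ Icc 1 n, f (shiftAbove k i) := by
  rw [← add_sum_erase _ f (a := k + 1) (mem_Icc.2 ⟨by omega, by omega⟩)]
  congr 1
  symm
  refine sum_nbij' (shiftAbove k) (fun j => if j ≤ k then j else j - 1) ?_ ?_ ?_ ?_
    (fun _ _ => rfl) <;>
    intro i hi <;> simp only [mem_erase, mem_Icc, shiftAbove] at hi ⊢ <;> split_ifs <;> omega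

end Insertion

section Statistics

def pairCount (n : ℕ) (Q : ℕ → ℕ → Prop) [DecidableRel Q] (a : ℕ → ℕ) : ℕ :=
  #((Icc 1 n ×ˢ Icc 1 n).filter fun p => p.1 < p.2 ∧ Q (a p.1) (a p.2))

lemma pairCount_eq_sum (n : ℕ) (Q : ℕ → ℕ → Prop) [DecidableRel Q] (a : ℕ → ℕ) :
    pairCount n Q a
      = ∑ i ∈ Icc 1 n, ∑ j ∈ Icc 1 n, if i < j ∧ Q (a i) (a j) then 1 else 0 := by
  rw [pairCount, card_filter, sum_product]

lemma pairCount_insertAt (Q : ℕ → ℕ → Prop) [DecidableRel Q] (a : ℕ → ℕ) {k n : ℕ}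
    (hk : k ≤ n) (M : ℕ) :
    pairCount (n + 1) Q (insertAt k M a) = pairCount n Q a
      + #((Icc 1 n).filter fun j => k < j ∧ Q M (a j))
      + #((Icc 1 n).filter fun i => i ≤ k ∧ Q (a i) M) := by
  have after_slot : ∀ j, k + 1 < shiftAbove k j ↔ k < j := fun j => by
    unfold shiftAbove; split_ifs <;> omega
  have before_slot : ∀ i, shiftAbove k i < k + 1 ↔ i ≤ k := fun i => by
    unfold shiftAbove; split_ifs <;> omega
  simp only [pairCount_eq_sum, sum_Icc_succ_eq_add_sum_shiftAbove _ hk, insertAt_shiftAbove,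
    insertAt_succ_self, shiftAbove_lt_shiftAbove_iff, after_slot, before_slot, lt_irrefl, false_and,
    if_false, zero_add, card_filter, sum_add_distrib]
  ring

def desSum (r n : ℕ) (a : ℕ → ℕ) : ℕ :=
  ∑ i ∈ (Icc 1 (n - 1)).filter (fun i => a (i + 1) + r ≤ a i), i

def desWeight (r n : ℕ) (a : ℕ → ℕ) (i : ℕ) : ℕ :=
  if i < n ∧ a (i + 1) + r ≤ a i then i else 0

lemma desSum_eq_sum_desWeight (r n : ℕ) (a : ℕ → ℕ) :
    desSum r n a = ∑ i ∈ Icc 1 n, desWeight r n a i := by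
  unfold desSum desWeight
  rw [← sum_filter]
  congr 1
  ext i
  simp only [mem_filter, mem_Icc]
  omega

def rmajSeq (r n : ℕ) (a : ℕ → ℕ) : ℕ :=
  desSum r n a + pairCount n (fun x y => y < x ∧ x < y + r) a

def invSeq (n : ℕ) (a : ℕ → ℕ) : ℕ := pairCount n (fun x y => y < x) a

lemma rmaj_eq_rmajSeq (r : ℕ) {n : ℕ} (π : Equiv.Perm (Fin n)) :
    rmaj r π = rmajSeq r n (pval π) := rfl

lemma invStat_eq_invSeq {n : ℕ} (π : Equiv.Perm (Fin n)) : invStat π = invSeq n (pval π) := rfl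

end Statistics

section SlotLabel

variable (n : ℕ) (F : ℕ → Prop) [DecidablePred F]

def slotLabel (k : ℕ) : ℕ :=
  #((Ioc k n).filter fun s => ¬ F s) + if F k then k else 0

lemma slotLabel_lt {k : ℕ} (hk : k ≤ n) : slotLabel n F k < n + 1 := by
  have := card_filter_le (Ioc k n) (fun s => ¬ F s)
  rw [Nat.card_Ioc] at this
  unfold slotLabel
  split_ifs <;> omega

lemma slotLabel_ne {k l : ℕ} (hkl : k < l) (hl : l ≤ n) :
    slotLabel n F k ≠ slotLabel n F l := by
  obtain ⟨l, rfl⟩ : ∃ l', l = l' + 1 := ⟨l - 1, by omega⟩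
  set c := fun s => if ¬ F s then 1 else 0
  have split : ∑ s ∈ Ioc k n, c s
      = ∑ s ∈ Ioc k l, c s + c (l + 1) + ∑ s ∈ Ioc (l + 1) n, c s := by
    rw [← sum_Ioc_succ_top (by omega), sum_Ioc_consecutive _ (by omega) hl]
  have between : ∑ s ∈ Ioc k l, c s ≤ l - k := by
    have := card_filter_le (Ioc k l) (fun s => ¬ F s)
    rwa [card_filter, Nat.card_Ioc] at this
  unfold slotLabel
  simp only [card_filter]
  rw [split]
  simp only [c] at between ⊢
  split_ifs <;> omega

lemma map_slotLabel_range :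
    (Multiset.range (n + 1)).map (slotLabel n F) = Multiset.range (n + 1) := by
  have inj : Set.InjOn (slotLabel n F) (range (n + 1)) := by
    intro k hk l hl hkl
    simp only [coe_range, Set.mem_Iio] at hk hl
    by_contra hne
    rcases Nat.lt_or_gt_of_ne hne with h | h
    · exact slotLabel_ne n F h (by omega) hkl
    · exact slotLabel_ne n F h (by omega) hkl.symm
  have image : (range (n + 1)).image (slotLabel n F) = range (n + 1) :=
    eq_of_subset_of_card_le
      (fun x hx => by
        obtain ⟨k, hk, rfl⟩ := mem_image.1 hx
        exact mem_range.2 (slotLabel_lt n F (by simpa [Nat.lt_succ_iff] using hk)))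
      (card_image_of_injOn inj).ge
  rw [← range_val, ← image_val_of_injOn inj, image]

lemma map_add_slotLabel (c : ℕ) :
    (Multiset.range (n + 1)).map (fun k => c + slotLabel n F k)
      = (Multiset.range (n + 1)).map (c + ·) := by
  conv_rhs => rw [← map_slotLabel_range n F, Multiset.map_map]
  rfl

end SlotLabel

section InsertMax

variable {n k : ℕ} {a : ℕ → ℕ}

lemma desSum_insertAt (r : ℕ) (ha : ∀ i, a i ≤ n) (hk : k ≤ n) :
    desSum r (n + 1) (insertAt k (n + 1) a) + desWeight r n a k
      = desSum r n a + #((Icc 1 n).filter fun j => k < j ∧ j < n ∧ a (j + 1) + r ≤ a j)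
        + (if k < n ∧ a (k + 1) + r ≤ n + 1 then k + 1 else 0) := by
  have pointwise : ∀ j ∈ Icc 1 n,
      desWeight r (n + 1) (insertAt k (n + 1) a) (shiftAbove k j)
        + (if j = k then desWeight r n a j else 0)
      = desWeight r n a j + (if k < j ∧ j < n ∧ a (j + 1) + r ≤ a j then 1 else 0) := by
    intro j hj
    have := ha j
    have := ha k
    rw [mem_Icc] at hj
    unfold shiftAbove
    split_ifs <;> simp only [desWeight, insertAt, Nat.add_sub_cancel] <;> split_ifs <;> omega
  have at_k : ∑ j ∈ Icc 1 n, (if j = k then desWeight r n a j else 0) = desWeight r n a k := by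
    rw [sum_ite_eq']
    simp only [desWeight, mem_Icc]
    split_ifs <;> omega
  have at_slot : desWeight r (n + 1) (insertAt k (n + 1) a) (k + 1)
      = if k < n ∧ a (k + 1) + r ≤ n + 1 then k + 1 else 0 := by
    simp only [desWeight, insertAt, Nat.add_sub_cancel]
    split_ifs <;> omega
  rw [desSum_eq_sum_desWeight, desSum_eq_sum_desWeight,
    sum_Icc_succ_eq_add_sum_shiftAbove _ hk, ← at_k, at_slot, card_filter]
  have := sum_congr rfl pointwise
  rw [sum_add_distrib, sum_add_distrib] at this
  omega

lemma invSeq_insertAt (ha : ∀ i, a i ≤ n) (hk : k ≤ n) :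
    invSeq (n + 1) (insertAt k (n + 1) a) = invSeq n a + (n - k) := by
  have all_after : (Icc 1 n).filter (fun j => k < j ∧ a j < n + 1) = Ioc k n := by
    ext j; have := ha j; simp only [mem_filter, mem_Icc, mem_Ioc]; omega
  have none_before : (Icc 1 n).filter (fun i => i ≤ k ∧ n + 1 < a i) = ∅ := by
    ext i; have := ha i; simp only [mem_filter, notMem_empty, iff_false]; omega
  rw [invSeq, pairCount_insertAt _ _ hk, all_after, none_before, Nat.card_Ioc, card_empty, add_zero,
    invSeq]

/-- The non-free slots in `(k, n]` are `n`, the slots followed by a letter with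
`a (s+1) + r > n + 1`, and the `r`-descents; the middle kind is counted by letter positions,
shifted by one against the slots. -/
lemma card_nonfree_slots (r : ℕ) (ha : ∀ i, a i ≤ n) (hk : k ≤ n) :
    #((Ioc k n).filter fun s => ¬ (s < n ∧ a (s + 1) + r ≤ n + 1 ∧ a s < a (s + 1) + r))
        + (if k < n ∧ n + 1 < a (k + 1) + r then 1 else 0)
      = (if k < n then 1 else 0) + #((Ioc k n).filter fun j => n + 1 < a j + r)
        + #((Ioc k n).filter fun j => j < n ∧ a (j + 1) + r ≤ a j) := by
  obtain ⟨d, hd⟩ : ∃ d, k + d = n := ⟨n - k, by omega⟩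
  induction d generalizing k with
  | zero => simp [← hd]
  | succ d ih =>
    have step := ih (k := k + 1) (by omega) (by omega)
    have := ha (k + 1)
    have := ha (k + 1 + 1)
    simp only [card_filter] at step ⊢
    rw [← insert_Ioc_add_one_left_eq_Ioc (by omega : k < n), sum_insert (by simp),
      sum_insert (by simp), sum_insert (by simp)]
    split_ifs at * <;> omega

lemma rmajSeq_insertAt (r : ℕ) (ha : ∀ i, a i ≤ n) (hk : k ≤ n) :
    rmajSeq r (n + 1) (insertAt k (n + 1) a) = rmajSeq r n a
      + slotLabel n (fun s => s < n ∧ a (s + 1) + r ≤ n + 1 ∧ a s < a (s + 1) + r) k := by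
  have big_after : (Icc 1 n).filter (fun j => k < j ∧ a j < n + 1 ∧ n + 1 < a j + r)
      = (Ioc k n).filter (fun j => n + 1 < a j + r) := by
    ext j; have := ha j; simp only [mem_filter, mem_Icc, mem_Ioc]; omega
  have none_before :
      (Icc 1 n).filter (fun i => i ≤ k ∧ n + 1 < a i ∧ a i < n + 1 + r) = ∅ := by
    ext i; have := ha i; simp only [mem_filter, notMem_empty, iff_false]; omega
  have descents : (Icc 1 n).filter (fun j => k < j ∧ j < n ∧ a (j + 1) + r ≤ a j)
      = (Ioc k n).filter (fun j => j < n ∧ a (j + 1) + r ≤ a j) := by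
    ext j; simp only [mem_filter, mem_Icc, mem_Ioc]; omega
  have hdes := desSum_insertAt r ha hk
  have hcount := card_nonfree_slots r ha hk
  have := ha k
  have := ha (k + 1)
  rw [descents] at hdes
  rw [rmajSeq, pairCount_insertAt _ _ hk, big_after, none_before, card_empty, add_zero,
    rmajSeq, slotLabel]
  unfold desWeight at hdes
  -- cases: `k = n`; `a (k+1) + r > n + 1`; an `r`-descent at `k`; a free slot `k`
  split_ifs at * <;> omega

end InsertMax

section Words

/-- The letters of `w` read with 1-based positions, as in `pval`, and `0` outside. -/
def letter (w : List ℕ) (i : ℕ) : ℕ := (0 :: w).getD i 0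

lemma letter_insertIdx {u : List ℕ} {k : ℕ} (hk : k ≤ u.length) (M : ℕ) :
    letter (u.insertIdx k M) = insertAt k M (letter u) := by
  funext i
  have : (0 :: u).insertIdx (k + 1) M = 0 :: u.insertIdx k M := List.insertIdx_succ_cons
  simp only [letter, ← this, List.getD_eq_getElem?_getD, List.getElem?_insertIdx, insertAt]
  split_ifs <;> first | rfl | omega | simp_all

lemma letter_le {n : ℕ} {u : List ℕ} (hu : ∀ x ∈ u, x ≤ n) (i : ℕ) :
    letter u i ≤ n := by
  rcases i with _ | i
  · simp [letter]
  · rw [letter, List.getD_cons_succ, List.getD_eq_getElem?_getD]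
    cases h : u[i]? with
    | none => simp
    | some x => exact hu x (List.mem_of_getElem? h)

def rmajWord (r : ℕ) (w : List ℕ) : ℕ := rmajSeq r w.length (letter w)

def invWord (w : List ℕ) : ℕ := invSeq w.length (letter w)

def words (n : ℕ) : Multiset (List ℕ) := (List.range' 1 n).permutations

lemma length_of_mem_words {n : ℕ} {u : List ℕ} (hu : u ∈ words n) : u.length = n := by
  simpa using (List.mem_permutations.1 hu).length_eq

lemma le_of_mem_words {n : ℕ} {u : List ℕ} (hu : u ∈ words n) : ∀ x ∈ u, x ≤ n := by
  intro x hx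
  have := (List.mem_permutations.1 hu).subset hx
  rw [List.mem_range'_1] at this
  omega

lemma permutations'Aux_eq_map_insertIdx (x : ℕ) (u : List ℕ) :
    u.permutations'Aux x = (List.range (u.length + 1)).map fun k => u.insertIdx k x :=
  List.ext_getElem (by simp [List.length_permutations'Aux])
    fun k _ _ => by simp [List.getElem_permutations'Aux]

lemma words_succ (n : ℕ) : words (n + 1)
    = (words n).bind fun u => (Multiset.range (n + 1)).map (u.insertIdx · (n + 1)) := by
  have top : (List.range' 1 (n + 1)).Perm ((n + 1) :: List.range' 1 n) := by
    rw [List.range'_concat, Nat.one_mul, Nat.add_comm]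
    exact List.perm_append_singleton _ _
  have h1 : words (n + 1) = ((List.range' 1 n).permutations' : Multiset (List ℕ)).bind
      fun u => (u.permutations'Aux (n + 1) : Multiset (List ℕ)) := by
    rw [Multiset.coe_bind, words, Multiset.coe_eq_coe]
    exact top.permutations.trans (List.permutations_perm_permutations' _)
  rw [h1, ← Multiset.coe_eq_coe.2 (List.permutations_perm_permutations' _)]
  refine Multiset.bind_congr fun u hu => ?_
  rw [permutations'Aux_eq_map_insertIdx, length_of_mem_words hu, ← Multiset.map_coe,
    Multiset.coe_range]

/-- The multiset with generating function `[n]_q! = [1]_q [2]_q ⋯ [n]_q`. -/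
def mahonian : ℕ → Multiset ℕ
  | 0 => {0}
  | n + 1 => (mahonian n).bind fun c => (Multiset.range (n + 1)).map (c + ·)

lemma map_words_eq_mahonian (s : List ℕ → ℕ) (h0 : s [] = 0)
    (hs : ∀ n, ∀ u ∈ words n,
      (Multiset.range (n + 1)).map (fun k => s (u.insertIdx k (n + 1)))
        = (Multiset.range (n + 1)).map (s u + ·)) (n : ℕ) :
    (words n).map s = mahonian n := by
  induction n with
  | zero => simp [words, mahonian, h0]
  | succ n ih =>
    rw [words_succ, Multiset.map_bind, mahonian, ← ih, Multiset.bind_map]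
    exact Multiset.bind_congr fun u hu => by rw [Multiset.map_map]; exact hs n u hu

lemma map_words_rmajWord (r n : ℕ) : (words n).map (rmajWord r) = mahonian n := by
  refine map_words_eq_mahonian _ (by simp [rmajWord, rmajSeq, desSum, pairCount]) ?_ n
  intro n u hu
  rw [← map_add_slotLabel n (fun s => s < n ∧ letter u (s + 1) + r ≤ n + 1 ∧
    letter u s < letter u (s + 1) + r)]
  refine Multiset.map_congr rfl fun k hk => ?_
  have hlen := length_of_mem_words hu
  have hk : k ≤ u.length := by rw [Multiset.mem_range] at hk; omega
  rw [rmajWord, List.length_insertIdx_of_le_length hk, letter_insertIdx hk, rmajWord,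
    hlen, rmajSeq_insertAt r (letter_le (le_of_mem_words hu)) (by omega)]

lemma map_words_invWord (n : ℕ) : (words n).map invWord = mahonian n := by
  refine map_words_eq_mahonian _ (by simp [invWord, invSeq, pairCount]) ?_ n
  intro n u hu
  -- with no free slot, the label of slot `k` is `n - k`
  rw [← map_add_slotLabel n fun _ => False]
  refine Multiset.map_congr rfl fun k hk => ?_
  have hlen := length_of_mem_words hu
  have hk : k ≤ u.length := by rw [Multiset.mem_range] at hk; omega
  rw [invWord, List.length_insertIdx_of_le_length hk, letter_insertIdx hk, invWord,
    hlen, invSeq_insertAt (letter_le (le_of_mem_words hu)) (by omega)]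
  simp [slotLabel]

end Words

section Permutations

def wordOf {n : ℕ} (π : Equiv.Perm (Fin n)) : List ℕ := List.ofFn fun i => (π i : ℕ) + 1

lemma length_wordOf {n : ℕ} (π : Equiv.Perm (Fin n)) : (wordOf π).length = n := by
  simp [wordOf]

lemma letter_wordOf {n : ℕ} (π : Equiv.Perm (Fin n)) : letter (wordOf π) = pval π := by
  funext i
  rcases i with _ | i
  · simp [letter, pval]
  · by_cases hi : i < n
    · simp [letter, pval, wordOf, Nat.succ_le_of_lt hi]
    · simp [letter, pval, wordOf, hi]

lemma map_wordOf_univ (n : ℕ) :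
    (Finset.univ : Finset (Equiv.Perm (Fin n))).val.map wordOf = words n := by
  have inj : Function.Injective (wordOf (n := n)) := fun π σ h => by
    ext i
    simpa [wordOf] using congrFun (List.ofFn_injective h) i
  have mem : ∀ π : Equiv.Perm (Fin n), wordOf π ∈ words n := fun π => by
    have nodup : (wordOf π).Nodup :=
      List.nodup_ofFn.2 fun i j h => π.injective (Fin.ext (by simpa using h))
    have sub : wordOf π ⊆ List.range' 1 n := fun x hx => by
      obtain ⟨i, rfl⟩ := List.mem_ofFn.1 hx
      simp only [List.mem_range'_1]
      omega
    exact List.mem_permutations.2 ((List.subperm_of_subset nodup sub).perm_of_length_le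
      (by simp [length_wordOf]))
  refine Multiset.eq_of_le_of_card_le ((Multiset.le_iff_subset
    (Multiset.Nodup.map inj Finset.univ.nodup)).2 fun w hw => ?_) ?_
  · obtain ⟨π, -, rfl⟩ := Multiset.mem_map.1 hw
    exact mem π
  · simp [words, List.length_permutations, Fintype.card_perm]

lemma map_rmaj_univ (r n : ℕ) :
    (Finset.univ : Finset (Equiv.Perm (Fin n))).val.map (rmaj r) = mahonian n := by
  have : (rmaj r : Equiv.Perm (Fin n) → ℕ) = rmajWord r ∘ wordOf := funext fun π => by
    rw [rmaj_eq_rmajSeq, Function.comp, rmajWord, letter_wordOf, length_wordOf]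
  rw [this, ← Multiset.map_map, map_wordOf_univ, map_words_rmajWord]

lemma map_invStat_univ (n : ℕ) :
    (Finset.univ : Finset (Equiv.Perm (Fin n))).val.map invStat = mahonian n := by
  have : (invStat : Equiv.Perm (Fin n) → ℕ) = invWord ∘ wordOf := funext fun π => by
    rw [invStat_eq_invSeq, Function.comp, invWord, letter_wordOf, length_wordOf]
  rw [this, ← Multiset.map_map, map_wordOf_univ, map_words_invWord]

end Permutations

lemma card_filter_eq_count_map {α : Type*} (s : Finset α) (f : α → ℕ) (m : ℕ) :
    #(s.filter (f · = m)) = (s.val.map f).count m := by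
  rw [Multiset.count_map, card_def, filter_val]
  congr 2
  ext a
  exact eq_comm

theorem rmaj_inv_equidistributed_general (n r : ℕ) (m : ℕ) :
    (Finset.univ.filter (fun π : Equiv.Perm (Fin n) => rmaj r π = m)).card =
    (Finset.univ.filter (fun π : Equiv.Perm (Fin n) => invStat π = m)).card := by
  rw [card_filter_eq_count_map, card_filter_eq_count_map, map_rmaj_univ, map_invStat_univ]

/-- For n ≥ 1 and r ≥ 1 the statistics rmaj and inv are
equidistributed over S_n: for every m, the number of π ∈ S_n with
rmaj(π) = m equals the number of π ∈ S_n with inv(π) = m. -/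
theorem rmaj_inv_equidistributed (n r : ℕ) (hn : 1 ≤ n) (hr : 1 ≤ r) (m : ℕ) :
    (Finset.univ.filter (fun π : Equiv.Perm (Fin n) => rmaj r π = m)).card =
    (Finset.univ.filter (fun π : Equiv.Perm (Fin n) => invStat π = m)).card :=
  rmaj_inv_equidistributed_general n r m
end
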